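/- arXiv:2510.03782 — 4 statements merged into one kernel-verified Lean document; each statement's English description precedes it below -/
import Mathlib

section
/- Let θ₁, θ₂ ∈ ℝᵈ with θ₁ ≠ θ₂, let k₁, k₂ > 0 be distinct real numbers, and let r_i(θ) = c_i − k_i‖θ − θ_i‖² (i = 1,2) for constants c_i ∈ ℝ. Fix β ∈ (1/2, 1) and set the backbone rewards h₁ = β r₁ + (1−β) r₂ and h₂ = (1−β) r₁ + β r₂, with unique global maximizers θ₁ᵇᵒⁿᵉ = (β k₁ θ₁ + (1−β) k₂ θ₂)/(β k₁ + (1−β) k₂) and θ₂ᵇᵒⁿᵉ = ((1−β) k₁ θ₁ + β k₂ θ₂)/((1−β) k₁ + β k₂). For a preference μ ∈ (0,1) define the testing reward g_μ = μ r₁ + (1−μ) r₂, the soup solution θ̄ = μ θ₁ + (1−μ) θ₂, and the bone-soup solution θ̄ᵇᵒⁿᵉ = λ θ₁ᵇᵒⁿᵉ + (1−λ) θ₂ᵇᵒⁿᵉ where λ = (β + μ − 1)/(2β − 1). Then for every μ in the open interval ((1 − √(2β² − 2β + 1))/2, (1 + √(2β² − 2β + 1))/2) one has g_μ(θ̄)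 < g_μ(θ̄ᵇᵒⁿᵉ), and the length of this interval satisfies √(2β² − 2β + 1) ≥ √2/2. -/
/-!
All points involved lie on the line `x ↦ θ₂ + x • (θ₁ - θ₂)`, along which
`g μ = μ c₁ + (1 - μ) c₂ - ‖θ₁ - θ₂‖² q(x)` with `q(x) = μ k₁ (1 - x)² + (1 - μ) k₂ x²`,
a parabola with vertex `x* = μ k₁ / M`, `M = μ k₁ + (1 - μ) k₂`. The soup sits at `x = μ` and the
bone soup at `x = A`, and with `P, Q` the normalisers of the two backbone maximisers
`μ - x* = (k₂ - k₁) μ (1 - μ) / M` and `A - x* = (k₂ - k₁) k₁ k₂ (μ (1 - μ) - β (1 - β)) / (M P Q)`.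
Since `P Q = β (1 - β) (k₁ - k₂)² + k₁ k₂ ≥ k₁ k₂`, the bone soup is strictly closer to the vertex
as soon as `β (1 - β) < 2 μ (1 - μ)`, which is the condition `(2μ - 1)² < 2β² - 2β + 1`.
-/

open AffineMap Set

section Line

variable {V : Type*} [NormedAddCommGroup V] [NormedSpace ℝ V]

theorem inv_smul_add_smul_eq_lineMap (θ₁ θ₂ : V) {w₁ w₂ : ℝ} (h : w₁ + w₂ ≠ 0) :
    (w₁ + w₂)⁻¹ • (w₁ • θ₁ + w₂ • θ₂) = lineMap θ₂ θ₁ (w₁ / (w₁ + w₂)) := by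
  rw [lineMap_apply_module]
  match_scalars
  · field_simp
  · field_simp
    ring

theorem smul_lineMap_add_smul_lineMap (θ₁ θ₂ : V) (l a b : ℝ) :
    l • lineMap θ₂ θ₁ a + (1 - l) • lineMap θ₂ θ₁ b = lineMap θ₂ θ₁ (l * a + (1 - l) * b) := by
  simp only [lineMap_apply_module]
  module

theorem weighted_sq_norm_sub_lineMap (θ₁ θ₂ : V) (a b x : ℝ) :
    a * ‖lineMap θ₂ θ₁ x - θ₁‖ ^ 2 + b * ‖lineMap θ₂ θ₁ x - θ₂‖ ^ 2
      = (a * (1 - x) ^ 2 + b * x ^ 2) * ‖θ₁ - θ₂‖ ^ 2 := by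
  rw [← dist_eq_norm, ← dist_eq_norm, dist_lineMap_left, dist_lineMap_right, dist_comm,
    dist_eq_norm, Real.norm_eq_abs, Real.norm_eq_abs, mul_pow, mul_pow, sq_abs, sq_abs]
  ring

end Line

theorem weighted_sq_lt_weighted_sq_iff {a b : ℝ} (h : 0 < a + b) (x y : ℝ) :
    a * (1 - x) ^ 2 + b * x ^ 2 < a * (1 - y) ^ 2 + b * y ^ 2 ↔
      (x - a / (a + b)) ^ 2 < (y - a / (a + b)) ^ 2 := by
  have complete_sq (z : ℝ) :
      a * (1 - z) ^ 2 + b * z ^ 2 = (a + b) * (z - a / (a + b)) ^ 2 + a * b / (a + b) := by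
    field_simp
    ring
  rw [complete_sq, complete_sq, add_lt_add_iff_right, mul_lt_mul_iff_right₀ h]

theorem abs_mul_sub_lt {p q s t : ℝ} (hs : 0 < s) (ht : 0 < t) (hq : 0 < q) (hqp : q < 2 * p) :
    |s * t * (p - q)| < p * (q * (s - t) ^ 2 + s * t) := by
  have hst : 0 < s * t := mul_pos hs ht
  rw [abs_lt]
  constructor <;> nlinarith [mul_nonneg hq.le (sq_nonneg (s - t))]

theorem lt_two_mul_mul_one_sub_of_mem_Ioo {β μ : ℝ}
    (hμ : μ ∈ Ioo ((1 - √(2 * β ^ 2 - 2 * β + 1)) / 2) ((1 + √(2 * β ^ 2 - 2 * β + 1)) / 2)) :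
    β * (1 - β) < 2 * (μ * (1 - μ)) := by
  have h : |2 * μ - 1| < √(2 * β ^ 2 - 2 * β + 1) :=
    abs_lt.2 ⟨by linarith [hμ.1], by linarith [hμ.2]⟩
  rw [Real.lt_sqrt (abs_nonneg _), sq_abs] at h
  linarith

theorem sqrt_two_div_two_le_sqrt (β : ℝ) : √2 / 2 ≤ √(2 * β ^ 2 - 2 * β + 1) := by
  rw [Real.le_sqrt (by positivity) (by nlinarith [sq_nonneg (2 * β - 1)]), div_pow,
    Real.sq_sqrt zero_le_two]
  nlinarith [sq_nonneg (2 * β - 1)]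

/-- The coordinate `x` of the bone-soup solution `θ₂ + x • (θ₁ - θ₂)`. -/
noncomputable def boneCoeff (β k₁ k₂ μ : ℝ) : ℝ :=
  (β + μ - 1) / (2 * β - 1) * (β * k₁ / (β * k₁ + (1 - β) * k₂)) +
    (1 - (β + μ - 1) / (2 * β - 1)) * ((1 - β) * k₁ / ((1 - β) * k₁ + β * k₂))

theorem boneCoeff_sub_eq {β k₁ k₂ μ : ℝ} (hβ : 2 * β - 1 ≠ 0)
    (hP : β * k₁ + (1 - β) * k₂ ≠ 0) (hQ : (1 - β) * k₁ + β * k₂ ≠ 0)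
    (hM : μ * k₁ + (1 - μ) * k₂ ≠ 0) :
    boneCoeff β k₁ k₂ μ - μ * k₁ / (μ * k₁ + (1 - μ) * k₂) =
      (k₂ - k₁) / (μ * k₁ + (1 - μ) * k₂) *
        (k₁ * k₂ * (μ * (1 - μ) - β * (1 - β)) /
          ((β * k₁ + (1 - β) * k₂) * ((1 - β) * k₁ + β * k₂))) := by
  have hβ' : β * 2 - 1 ≠ 0 := by rwa [mul_comm]
  have hQ' : k₁ * (1 - β) + β * k₂ ≠ 0 := by rwa [mul_comm k₁]
  have hM' : μ * k₁ + k₂ * (1 - μ) ≠ 0 := by rwa [mul_comm k₂]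
  rw [boneCoeff]
  field_simp
  ring

theorem self_sub_mul_div_eq {k₁ k₂ μ : ℝ} (hM : μ * k₁ + (1 - μ) * k₂ ≠ 0) :
    μ - μ * k₁ / (μ * k₁ + (1 - μ) * k₂) = (k₂ - k₁) / (μ * k₁ + (1 - μ) * k₂) * (μ * (1 - μ)) := by
  field_simp
  ring

theorem weighted_sq_boneCoeff_lt {β k₁ k₂ μ : ℝ} (hk₁ : 0 < k₁) (hk₂ : 0 < k₂) (hk : k₁ ≠ k₂)
    (hβ : β ∈ Ioo (1 / 2 : ℝ) 1) (hμ : β * (1 - β) < 2 * (μ * (1 - μ))) :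
    μ * k₁ * (1 - boneCoeff β k₁ k₂ μ) ^ 2 + (1 - μ) * k₂ * boneCoeff β k₁ k₂ μ ^ 2 <
      μ * k₁ * (1 - μ) ^ 2 + (1 - μ) * k₂ * μ ^ 2 := by
  obtain ⟨hβ₀, hβ₁⟩ := hβ
  have hββ : 0 < β * (1 - β) := by nlinarith
  have hp : 0 < μ * (1 - μ) := by linarith
  have hμ₀ : 0 < μ := by nlinarith
  have hμ₁ : μ < 1 := by nlinarith
  have hM : 0 < μ * k₁ + (1 - μ) * k₂ := by nlinarith
  have hP : 0 < β * k₁ + (1 - β) * k₂ := by nlinarith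
  have hQ : 0 < (1 - β) * k₁ + β * k₂ := by nlinarith
  have hPQ : (β * k₁ + (1 - β) * k₂) * ((1 - β) * k₁ + β * k₂) =
      β * (1 - β) * (k₁ - k₂) ^ 2 + k₁ * k₂ := by ring
  rw [weighted_sq_lt_weighted_sq_iff hM, boneCoeff_sub_eq (by linarith) hP.ne' hQ.ne' hM.ne',
    self_sub_mul_div_eq hM.ne', mul_pow, mul_pow, mul_lt_mul_iff_right₀ (by positivity [sub_ne_zero.2 hk.symm])]
  rw [sq_lt_sq, abs_div, abs_of_pos (mul_pos hP hQ), abs_of_pos hp, div_lt_iff₀ (mul_pos hP hQ), hPQ]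
  exact abs_mul_sub_lt hk₁ hk₂ hββ hμ

theorem stmt_0 {d : ℕ} (θ₁ θ₂ : EuclideanSpace ℝ (Fin d)) (hθ : θ₁ ≠ θ₂)
    (k₁ k₂ : ℝ) (hk₁ : 0 < k₁) (hk₂ : 0 < k₂) (hk : k₁ ≠ k₂)
    (c₁ c₂ : ℝ)
    (r₁ r₂ : EuclideanSpace ℝ (Fin d) → ℝ)
    (hr₁ : ∀ θ, r₁ θ = c₁ - k₁ * ‖θ - θ₁‖ ^ 2)
    (hr₂ : ∀ θ, r₂ θ = c₂ - k₂ * ‖θ - θ₂‖ ^ 2)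
    (β : ℝ) (hβ : β ∈ Set.Ioo (1/2 : ℝ) 1)
    (θ₁bone θ₂bone : EuclideanSpace ℝ (Fin d))
    (hbone₁ : θ₁bone = (β * k₁ + (1 - β) * k₂)⁻¹ • ((β * k₁) • θ₁ + ((1 - β) * k₂) • θ₂))
    (hbone₂ : θ₂bone = ((1 - β) * k₁ + β * k₂)⁻¹ • (((1 - β) * k₁) • θ₁ + (β * k₂) • θ₂))
    (g : ℝ → EuclideanSpace ℝ (Fin d) → ℝ)
    (hg : ∀ μ θ, g μ θ = μ * r₁ θ + (1 - μ) * r₂ θ)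
    (θbar : ℝ → EuclideanSpace ℝ (Fin d))
    (hθbar : ∀ μ, θbar μ = μ • θ₁ + (1 - μ) • θ₂)
    (θbarbone : ℝ → EuclideanSpace ℝ (Fin d))
    (hθbarbone : ∀ μ, θbarbone μ =
      ((β + μ - 1) / (2 * β - 1)) • θ₁bone + (1 - (β + μ - 1) / (2 * β - 1)) • θ₂bone) :
    (∀ μ ∈ Set.Ioo ((1 - Real.sqrt (2 * β ^ 2 - 2 * β + 1)) / 2)
        ((1 + Real.sqrt (2 * β ^ 2 - 2 * β + 1)) / 2),
      g μ (θbar μ) < g μ (θbarbone μ)) ∧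
    Real.sqrt (2 * β ^ 2 - 2 * β + 1) ≥ Real.sqrt 2 / 2 := by
  refine ⟨fun μ hμ => ?_, sqrt_two_div_two_le_sqrt β⟩
  have hP : 0 < β * k₁ + (1 - β) * k₂ := by nlinarith [hβ.1, hβ.2]
  have hQ : 0 < (1 - β) * k₁ + β * k₂ := by nlinarith [hβ.1, hβ.2]
  have g_lineMap (x : ℝ) : g μ (lineMap θ₂ θ₁ x) = μ * c₁ + (1 - μ) * c₂ -
      (μ * k₁ * (1 - x) ^ 2 + (1 - μ) * k₂ * x ^ 2) * ‖θ₁ - θ₂‖ ^ 2 := by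
    rw [hg, hr₁, hr₂]
    linear_combination -weighted_sq_norm_sub_lineMap θ₁ θ₂ (μ * k₁) ((1 - μ) * k₂) x
  have hbar : θbar μ = lineMap θ₂ θ₁ μ := by
    rw [hθbar, lineMap_apply_module, add_comm]
  have hbarbone : θbarbone μ = lineMap θ₂ θ₁ (boneCoeff β k₁ k₂ μ) := by
    rw [hθbarbone, hbone₁, hbone₂, inv_smul_add_smul_eq_lineMap _ _ hP.ne',
      inv_smul_add_smul_eq_lineMap _ _ hQ.ne', smul_lineMap_add_smul_lineMap, boneCoeff]
  rw [hbar, hbarbone, g_lineMap, g_lineMap, sub_lt_sub_iff_left]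
  exact mul_lt_mul_of_pos_right
    (weighted_sq_boneCoeff_lt hk₁ hk₂ hk hβ (lt_two_mul_mul_one_sub_of_mem_Ioo hμ))
    (by positivity [sub_ne_zero.2 hθ])
end

section
/- Let θ₁, θ₂ ∈ ℝᵈ, let k₁, k₂ > 0 be distinct, μ ∈ (0, 1), β ∈ (1/2, 1). Set θ* = (μ k₁ θ₁ + (1−μ) k₂ θ₂)/(μ k₁ + (1−μ) k₂), θ₁ᵇᵒⁿᵉ = (β k₁ θ₁ + (1−β) k₂ θ₂)/(β k₁ + (1−β) k₂), θ₂ᵇᵒⁿᵉ = ((1−β) k₁ θ₁ + β k₂ θ₂)/((1−β) k₁ + β k₂), λ = (β + μ − 1)/(2β − 1), and θ̄ᵇᵒⁿᵉ = λ θ₁ᵇᵒⁿᵉ + (1−λ) θ₂ᵇᵒⁿᵉ. Then ‖θ̄ᵇᵒⁿᵉ − θ*‖² = [ k₁ k₂ (k₁ − k₂)(β − μ)(β + μ − 1) / ((μ k₁ + (1−μ) k₂)(β k₁ + (1−β) k₂)((1−β) k₁ + β k₂)) ]² · ‖θ₁ − θ₂‖². -/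
/-! Each of θ*, θ₁ᵇᵒⁿᵉ, θ₂ᵇᵒⁿᵉ is a point θ₂ + s • (θ₁ - θ₂) of the line through θ₁ and θ₂, with
`s = a k₁ / (a k₁ + (1 - a) k₂)` for the respective mixing weight `a`. Hence so is the merged point
θ̄ᵇᵒⁿᵉ, and θ̄ᵇᵒⁿᵉ - θ* is the multiple of θ₁ - θ₂ by the difference of the line coordinates;
clearing denominators in that rational function of k₁, k₂, β, μ gives the factored form. -/

section LineCoordinates

variable {E : Type*} [AddCommGroup E] [Module ℝ E]

theorem inv_smul_add_smul_eq_add_smul_sub {a b : ℝ} (hab : a + b ≠ 0) (x y : E) :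
    (a + b)⁻¹ • (a • x + b • y) = y + (a / (a + b)) • (x - y) := by
  refine smul_right_injective E hab ?_
  dsimp only
  rw [smul_inv_smul₀ hab, smul_add, smul_smul, mul_div_cancel₀ _ hab]
  module

theorem smul_add_one_sub_smul_sub_eq_smul (x y : E) (lam s t u : ℝ) :
    lam • (y + s • (x - y)) + (1 - lam) • (y + t • (x - y)) - (y + u • (x - y)) =
      (lam * s + (1 - lam) * t - u) • (x - y) := by
  module

end LineCoordinates

theorem boneSoup_line_coordinate_error {k₁ k₂ μ β : ℝ}
    (hA : μ * k₁ + (1 - μ) * k₂ ≠ 0) (hB : β * k₁ + (1 - β) * k₂ ≠ 0)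
    (hC : (1 - β) * k₁ + β * k₂ ≠ 0) (hβ : 2 * β - 1 ≠ 0) :
    (β + μ - 1) / (2 * β - 1) * (β * k₁ / (β * k₁ + (1 - β) * k₂)) +
        (1 - (β + μ - 1) / (2 * β - 1)) * ((1 - β) * k₁ / ((1 - β) * k₁ + β * k₂)) -
        μ * k₁ / (μ * k₁ + (1 - μ) * k₂) =
      -(k₁ * k₂ * (k₁ - k₂) * (β - μ) * (β + μ - 1) /
        ((μ * k₁ + (1 - μ) * k₂) * (β * k₁ + (1 - β) * k₂) * ((1 - β) * k₁ + β * k₂))) := by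
  rw [div_mul_div_comm, one_sub_div hβ, div_mul_div_comm,
    div_add_div _ _ (mul_ne_zero hβ hB) (mul_ne_zero hβ hC),
    div_sub_div _ _ (mul_ne_zero (mul_ne_zero hβ hB) (mul_ne_zero hβ hC)) hA, neg_div',
    div_eq_div_iff (by positivity) (by positivity)]
  ring

theorem stmt_5_general {d : ℕ} (θ₁ θ₂ : EuclideanSpace ℝ (Fin d))
    (k₁ k₂ : ℝ) (hk₁ : 0 < k₁) (hk₂ : 0 < k₂)
    (μ : ℝ) (hμ : μ ∈ Set.Ioo (0 : ℝ) 1)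
    (β : ℝ) (hβ : β ∈ Set.Ioo (1/2 : ℝ) 1)
    (θstar θ₁bone θ₂bone θbarbone : EuclideanSpace ℝ (Fin d)) (lam : ℝ)
    (hstar : θstar = (μ * k₁ + (1 - μ) * k₂)⁻¹ • ((μ * k₁) • θ₁ + ((1 - μ) * k₂) • θ₂))
    (hbone₁ : θ₁bone = (β * k₁ + (1 - β) * k₂)⁻¹ • ((β * k₁) • θ₁ + ((1 - β) * k₂) • θ₂))
    (hbone₂ : θ₂bone = ((1 - β) * k₁ + β * k₂)⁻¹ • (((1 - β) * k₁) • θ₁ + (β * k₂) • θ₂))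
    (hlam : lam = (β + μ - 1) / (2 * β - 1))
    (hbar : θbarbone = lam • θ₁bone + (1 - lam) • θ₂bone) :
    ‖θbarbone - θstar‖ ^ 2 =
      (k₁ * k₂ * (k₁ - k₂) * (β - μ) * (β + μ - 1) /
        ((μ * k₁ + (1 - μ) * k₂) * (β * k₁ + (1 - β) * k₂) * ((1 - β) * k₁ + β * k₂))) ^ 2 *
      ‖θ₁ - θ₂‖ ^ 2 := by
  obtain ⟨hμ₀, hμ₁⟩ := hμ
  obtain ⟨hβ₀, hβ₁⟩ := hβ
  have hA : μ * k₁ + (1 - μ) * k₂ ≠ 0 :=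
    (add_pos (mul_pos hμ₀ hk₁) (mul_pos (sub_pos.2 hμ₁) hk₂)).ne'
  have hB : β * k₁ + (1 - β) * k₂ ≠ 0 :=
    (add_pos (mul_pos (by linarith) hk₁) (mul_pos (sub_pos.2 hβ₁) hk₂)).ne'
  have hC : (1 - β) * k₁ + β * k₂ ≠ 0 :=
    (add_pos (mul_pos (sub_pos.2 hβ₁) hk₁) (mul_pos (by linarith) hk₂)).ne'
  rw [hbar, hlam, hbone₁, hbone₂, hstar, inv_smul_add_smul_eq_add_smul_sub hA,
    inv_smul_add_smul_eq_add_smul_sub hB, inv_smul_add_smul_eq_add_smul_sub hC,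
    smul_add_one_sub_smul_sub_eq_smul,
    boneSoup_line_coordinate_error hA hB hC (by linarith), norm_smul, mul_pow, Real.norm_eq_abs,
    sq_abs, neg_sq]

theorem stmt_5 {d : ℕ} (θ₁ θ₂ : EuclideanSpace ℝ (Fin d))
    (k₁ k₂ : ℝ) (hk₁ : 0 < k₁) (hk₂ : 0 < k₂) (hk : k₁ ≠ k₂)
    (μ : ℝ) (hμ : μ ∈ Set.Ioo (0 : ℝ) 1)
    (β : ℝ) (hβ : β ∈ Set.Ioo (1/2 : ℝ) 1)
    (θstar θ₁bone θ₂bone θbarbone : EuclideanSpace ℝ (Fin d)) (lam : ℝ)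
    (hstar : θstar = (μ * k₁ + (1 - μ) * k₂)⁻¹ • ((μ * k₁) • θ₁ + ((1 - μ) * k₂) • θ₂))
    (hbone₁ : θ₁bone = (β * k₁ + (1 - β) * k₂)⁻¹ • ((β * k₁) • θ₁ + ((1 - β) * k₂) • θ₂))
    (hbone₂ : θ₂bone = ((1 - β) * k₁ + β * k₂)⁻¹ • (((1 - β) * k₁) • θ₁ + (β * k₂) • θ₂))
    (hlam : lam = (β + μ - 1) / (2 * β - 1))
    (hbar : θbarbone = lam • θ₁bone + (1 - lam) • θ₂bone) :
    ‖θbarbone - θstar‖ ^ 2 =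
      (k₁ * k₂ * (k₁ - k₂) * (β - μ) * (β + μ - 1) /
        ((μ * k₁ + (1 - μ) * k₂) * (β * k₁ + (1 - β) * k₂) * ((1 - β) * k₁ + β * k₂))) ^ 2 *
      ‖θ₁ - θ₂‖ ^ 2 :=
  stmt_5_general θ₁ θ₂ k₁ k₂ hk₁ hk₂ μ hμ β hβ θstar θ₁bone θ₂bone θbarbone lam hstar hbone₁ hbone₂
    hlam hbar
end

section
/- Let θ₁, θ₂ ∈ ℝᵈ, let k₁, k₂ > 0 be distinct, and μ ∈ (0, 1). Set θ* = (μ k₁ θ₁ + (1−μ) k₂ θ₂)/(μ k₁ + (1−μ) k₂) and θ̄ = μ θ₁ + (1−μ) θ₂. Then ‖θ̄ − θ*‖² = [ (k₁ − k₂)(1−μ) μ / (μ k₁ + (1−μ) k₂) ]² · ‖θ₁ − θ₂‖². -/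
theorem stmt_6 {d : ℕ} (θ₁ θ₂ : EuclideanSpace ℝ (Fin d))
    (k₁ k₂ : ℝ) (hk₁ : 0 < k₁) (hk₂ : 0 < k₂) (hk : k₁ ≠ k₂)
    (μ : ℝ) (hμ : μ ∈ Set.Ioo (0 : ℝ) 1)
    (θstar θbar : EuclideanSpace ℝ (Fin d))
    (hstar : θstar = (μ * k₁ + (1 - μ) * k₂)⁻¹ • ((μ * k₁) • θ₁ + ((1 - μ) * k₂) • θ₂))
    (hbar : θbar = μ • θ₁ + (1 - μ) • θ₂) :
    ‖θbar - θstar‖ ^ 2 =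
      ((k₁ - k₂) * (1 - μ) * μ / (μ * k₁ + (1 - μ) * k₂)) ^ 2 * ‖θ₁ - θ₂‖ ^ 2 := by
  obtain ⟨h0, h1⟩ := hμ
  have hDpos : 0 < μ * k₁ + (1 - μ) * k₂ := by nlinarith
  have hD : μ * k₁ + (1 - μ) * k₂ ≠ 0 := ne_of_gt hDpos
  have key : θbar - θstar = ((k₁ - k₂) * (1 - μ) * μ / (μ * k₁ + (1 - μ) * k₂)) • (θ₂ - θ₁) := by
    subst hstar hbar
    match_scalars <;> field_simp <;> ring
  rw [key, norm_smul, norm_sub_rev θ₂ θ₁, mul_pow, Real.norm_eq_abs, sq_abs]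
end

section
/- Let k₁, k₂ > 0 be distinct, β ∈ (1/2, 1), and μ ∈ ( (1 − √(2β² − 2β + 1))/2 , (1 + √(2β² − 2β + 1))/2 ). Then [ k₁ k₂ (β − μ)(β + μ − 1) / ((β k₁ + (1−β) k₂)((1−β) k₁ + β k₂)) ]² < ((1−μ)μ)². Consequently, for any θ₁ ≠ θ₂ in ℝᵈ, the bone-soup error E(β, μ) = [ k₁ k₂ (k₁ − k₂)(β − μ)(β + μ − 1) / ((μ k₁ + (1−μ) k₂)(β k₁ + (1−β) k₂)((1−β) k₁ + β k₂)) ]² ‖θ₁ − θ₂‖² is strictly less than the soup error E(1, μ) = [ (k₁ − k₂)(1−μ)μ / (μ k₁ + (1−μ) k₂) ]² ‖θ₁ − θ₂‖². -/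
set_option maxHeartbeats 1000000 in
theorem stmt_11 {d : ℕ} (k₁ k₂ : ℝ) (hk₁ : 0 < k₁) (hk₂ : 0 < k₂) (hk : k₁ ≠ k₂)
    (β : ℝ) (hβ : β ∈ Set.Ioo (1/2 : ℝ) 1) (μ : ℝ)
    (hμ : μ ∈ Set.Ioo ((1 - Real.sqrt (2 * β ^ 2 - 2 * β + 1)) / 2)
        ((1 + Real.sqrt (2 * β ^ 2 - 2 * β + 1)) / 2)) :
    (k₁ * k₂ * (β - μ) * (β + μ - 1) /
      ((β * k₁ + (1 - β) * k₂) * ((1 - β) * k₁ + β * k₂))) ^ 2 < ((1 - μ) * μ) ^ 2 ∧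
    ∀ θ₁ θ₂ : EuclideanSpace ℝ (Fin d), θ₁ ≠ θ₂ →
      (k₁ * k₂ * (k₁ - k₂) * (β - μ) * (β + μ - 1) /
        ((μ * k₁ + (1 - μ) * k₂) * (β * k₁ + (1 - β) * k₂) * ((1 - β) * k₁ + β * k₂))) ^ 2 *
        ‖θ₁ - θ₂‖ ^ 2 <
      ((k₁ - k₂) * (1 - μ) * μ / (μ * k₁ + (1 - μ) * k₂)) ^ 2 * ‖θ₁ - θ₂‖ ^ 2 := by
  obtain ⟨hβ0, hβ1⟩ := hβ
  obtain ⟨hμ1, hμ2⟩ := hμ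
  have hβpos : (0:ℝ) < β := by linarith
  have harg : (0:ℝ) ≤ 2 * β ^ 2 - 2 * β + 1 := by nlinarith [sq_nonneg (2*β - 1)]
  have hs : (Real.sqrt (2 * β ^ 2 - 2 * β + 1)) ^ 2 = 2 * β ^ 2 - 2 * β + 1 :=
    Real.sq_sqrt harg
  set s := Real.sqrt (2 * β ^ 2 - 2 * β + 1) with hsdef
  have hsq : (2*μ - 1)^2 < s^2 := by
    have h1 : 2*μ - 1 < s := by linarith
    have h2 : -s < 2*μ - 1 := by linarith
    exact sq_lt_sq' h2 h1
  have key : β * (1 - β) < 2 * μ * (1 - μ) := by nlinarith [hsq, hs]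
  have hβb : (0:ℝ) < β * (1 - β) := by nlinarith
  have hμpos : (0:ℝ) < μ * (1 - μ) := by nlinarith
  have hμ0 : (0:ℝ) < μ := by nlinarith
  have hμ1' : μ < 1 := by nlinarith
  have hD1 : (0:ℝ) < β * k₁ + (1 - β) * k₂ := by nlinarith
  have hD2 : (0:ℝ) < (1 - β) * k₁ + β * k₂ := by nlinarith
  have hDμ : (0:ℝ) < μ * k₁ + (1 - μ) * k₂ := by nlinarith
  have hkne : k₁ - k₂ ≠ 0 := sub_ne_zero_of_ne hk
  have hksq : (0:ℝ) < (k₁ - k₂)^2 := by positivity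
  have hDD : k₁ * k₂ < (β * k₁ + (1 - β) * k₂) * ((1 - β) * k₁ + β * k₂) := by
    nlinarith [hksq, hβb]
  have habs : |(β - μ) * (β + μ - 1)| < (1 - μ) * μ := by
    rw [abs_lt]
    constructor <;> nlinarith
  have hq : |k₁ * k₂ * (β - μ) * (β + μ - 1) /
      ((β * k₁ + (1 - β) * k₂) * ((1 - β) * k₁ + β * k₂))| < (1 - μ) * μ := by
    rw [abs_div, abs_of_pos (mul_pos hD1 hD2), div_lt_iff₀ (mul_pos hD1 hD2)]
    have heq : |k₁ * k₂ * (β - μ) * (β + μ - 1)| = (k₁ * k₂) * |(β - μ) * (β + μ - 1)| := by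
      rw [show k₁ * k₂ * (β - μ) * (β + μ - 1) = (k₁*k₂) * ((β - μ) * (β + μ - 1)) by ring,
        abs_mul, abs_of_pos (by positivity)]
    rw [heq]
    calc (k₁ * k₂) * |(β - μ) * (β + μ - 1)|
        < ((β * k₁ + (1 - β) * k₂) * ((1 - β) * k₁ + β * k₂)) * ((1 - μ) * μ) :=
          mul_lt_mul'' hDD habs (by positivity) (abs_nonneg _)
      _ = (1 - μ) * μ * ((β * k₁ + (1 - β) * k₂) * ((1 - β) * k₁ + β * k₂)) := by ring
  obtain ⟨hql, hqr⟩ := abs_lt.mp hq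
  have part1 : (k₁ * k₂ * (β - μ) * (β + μ - 1) /
      ((β * k₁ + (1 - β) * k₂) * ((1 - β) * k₁ + β * k₂))) ^ 2 < ((1 - μ) * μ) ^ 2 :=
    sq_lt_sq' hql hqr
  refine ⟨part1, fun θ₁ θ₂ hθ => ?_⟩
  have hn : (0:ℝ) < ‖θ₁ - θ₂‖ ^ 2 :=
    pow_pos (norm_sub_pos_iff.mpr hθ) 2
  have hc : (0:ℝ) < ((k₁ - k₂) / (μ * k₁ + (1 - μ) * k₂)) ^ 2 := by
    have h := pow_pos (abs_pos.mpr (div_ne_zero hkne (ne_of_gt hDμ))) 2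
    rwa [sq_abs] at h
  have hgoal :
      (k₁ * k₂ * (k₁ - k₂) * (β - μ) * (β + μ - 1) /
        ((μ * k₁ + (1 - μ) * k₂) * (β * k₁ + (1 - β) * k₂) * ((1 - β) * k₁ + β * k₂))) ^ 2 <
      ((k₁ - k₂) * (1 - μ) * μ / (μ * k₁ + (1 - μ) * k₂)) ^ 2 := by
    have e1 : (k₁ * k₂ * (k₁ - k₂) * (β - μ) * (β + μ - 1) /
        ((μ * k₁ + (1 - μ) * k₂) * (β * k₁ + (1 - β) * k₂) * ((1 - β) * k₁ + β * k₂))) ^ 2 =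
        (k₁ * k₂ * (β - μ) * (β + μ - 1) /
          ((β * k₁ + (1 - β) * k₂) * ((1 - β) * k₁ + β * k₂))) ^ 2 *
        ((k₁ - k₂) / (μ * k₁ + (1 - μ) * k₂)) ^ 2 := by
      rw [← mul_pow, div_mul_div_comm]
      rw [show (β * k₁ + (1 - β) * k₂) * ((1 - β) * k₁ + β * k₂) * (μ * k₁ + (1 - μ) * k₂)
          = (μ * k₁ + (1 - μ) * k₂) * (β * k₁ + (1 - β) * k₂) * ((1 - β) * k₁ + β * k₂) by ring]
      rw [show k₁ * k₂ * (β - μ) * (β + μ - 1) * (k₁ - k₂)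
          = k₁ * k₂ * (k₁ - k₂) * (β - μ) * (β + μ - 1) by ring]
    have e2 : ((k₁ - k₂) * (1 - μ) * μ / (μ * k₁ + (1 - μ) * k₂)) ^ 2 =
        ((1 - μ) * μ) ^ 2 * ((k₁ - k₂) / (μ * k₁ + (1 - μ) * k₂)) ^ 2 := by
      rw [← mul_pow, ← mul_div_assoc]
      rw [show (1 - μ) * μ * (k₁ - k₂) = (k₁ - k₂) * (1 - μ) * μ by ring]
    rw [e1, e2]
    exact mul_lt_mul_of_pos_right part1 hc
  exact mul_lt_mul_of_pos_right hgoal hn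
end
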